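/- For every integer k ≥ 1 and every integer n with 2^{2k-1} ≤ n ≤ 2^{2k+1} - 1, we have S(n) ≤ 2^{k+1}; moreover, S(n) = 2^{k+1} holds only when n = 2^{2k+1} - 1. -/

import Mathlib

/-- `inv2 n` is the number of inversions in the binary representation of `n`,
i.e. the number of pairs of bit positions `a > b` such that bit `a` of `n` is `1`
and bit `b` of `n` is `0`. -/
def inv2 (n : ℕ) : ℕ :=
  ((Finset.range (n + 1) ×ˢ Finset.range (n + 1)).filter
    (fun p => p.2 < p.1 ∧ n.testBit p.1 = true ∧ n.testBit p.2 = false)).card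

/-- `iSeq n = (-1)^(inv2 n)`. -/
def iSeq (n : ℕ) : ℤ := (-1) ^ inv2 n


/-- The summatory function `S N = ∑_{0 ≤ n ≤ N} iSeq n`. -/
def S (N : ℕ) : ℤ := ∑ n ∈ Finset.range (N + 1), iSeq n

/-!
Write `tₙ = (-1) ^ s₂(n)` for the Thue–Morse sign. Appending a `1` to the binary expansion of `n`
creates no inversion and appending a `0` creates `s₂(n)` of them, so `i₂ₙ₊₁ = iₙ` and
`i₂ₙ = tₙ iₙ`. Hence the planar walk `wₘ = ∑_{n<m} iₙ (1, tₙ)` satisfies `w₂ₘ = H wₘ` for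
`H (a, b) = (a + b, a - b)`, and since `H² = 2` also `w₄ₘ₊₁ = w₄ₘ₊₃ = wₘ + wₘ₊₁`, twice the
midpoint of two earlier points. By induction on `j`, every `wₘ` with `m ≤ 2ʲ` lies in the triangle
`Hʲ T`, `T = {0 ≤ b ≤ a ≤ 1}`, and only `w_{2ʲ}` lies at its corner `Hʲ (1, 1)`. For `j = 2k + 1`
this triangle is `2ᵏ H T`, whose largest first coordinate `2ᵏ⁺¹` is attained only at that corner,
and `S n` is the first coordinate of `wₙ₊₁`.
-/

open Finset

theorem Nat.lt_of_testBit_of_lt_two_pow {n L a : ℕ} (h : n < 2 ^ L) (ha : n.testBit a = true) :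
    a < L := by
  by_contra! hL
  rw [Nat.testBit_lt_two_pow (h.trans_le (Nat.pow_le_pow_right two_pos hL))] at ha
  exact Bool.false_ne_true ha

theorem inv2_eq_card_range {n L : ℕ} (h : n < 2 ^ L) :
    inv2 n =
      #{p ∈ range L ×ˢ range L | p.2 < p.1 ∧ n.testBit p.1 = true ∧ n.testBit p.2 = false} := by
  have hn : n < 2 ^ (n + 1) := Nat.lt_two_pow_self.trans (Nat.pow_lt_pow_succ one_lt_two)
  unfold inv2
  congr 1
  ext ⟨a, b⟩
  simp only [mem_filter, mem_product, mem_range]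
  constructor <;> rintro ⟨-, hba, ha, hb⟩
  · have haL := Nat.lt_of_testBit_of_lt_two_pow h ha
    exact ⟨⟨haL, by omega⟩, hba, ha, hb⟩
  · have han := Nat.lt_of_testBit_of_lt_two_pow hn ha
    exact ⟨⟨han, by omega⟩, hba, ha, hb⟩

theorem card_testBit_eq_length_bitIndices {n L : ℕ} (h : n < 2 ^ L) :
    #{a ∈ range L | n.testBit a = true} = n.bitIndices.length := by
  rw [← List.toFinset_card_of_nodup Nat.bitIndices_nodup]
  congr 1
  ext a
  simp only [mem_filter, mem_range, List.mem_toFinset, Nat.mem_bitIndices]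
  exact ⟨fun h => h.2, fun ha => ⟨Nat.lt_of_testBit_of_lt_two_pow h ha, ha⟩⟩

theorem card_inversions_succ (m L : ℕ) :
    #{p ∈ range (L + 1) ×ˢ range (L + 1) |
        p.2 < p.1 ∧ m.testBit p.1 = true ∧ m.testBit p.2 = false} =
      #{p ∈ range L ×ˢ range L |
        p.2 < p.1 ∧ (m / 2).testBit p.1 = true ∧ (m / 2).testBit p.2 = false} +
      if m.testBit 0 then 0 else #{a ∈ range L | (m / 2).testBit a = true} := by
  simp only [card_filter, sum_product, sum_range_succ', Nat.testBit_add_one]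
  cases m.testBit 0 <;> simp [sum_add_distrib]

theorem inv2_eq_inv2_div_two (m : ℕ) :
    inv2 m = inv2 (m / 2) + if m.testBit 0 then 0 else (m / 2).bitIndices.length := by
  have hm : m < 2 ^ (m + 1) := Nat.lt_two_pow_self.trans (Nat.pow_lt_pow_succ one_lt_two)
  have hm2 : m / 2 < 2 ^ m := by rw [pow_succ] at hm; omega
  rw [inv2_eq_card_range hm, card_inversions_succ, ← inv2_eq_card_range hm2,
    card_testBit_eq_length_bitIndices hm2]

def thueMorse (n : ℕ) : ℤ := (-1) ^ n.bitIndices.length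

theorem thueMorse_two_mul (n : ℕ) : thueMorse (2 * n) = thueMorse n := by
  simp [thueMorse]

theorem thueMorse_two_mul_add_one (n : ℕ) : thueMorse (2 * n + 1) = -thueMorse n := by
  simp [thueMorse, pow_succ]

theorem thueMorse_mul_self (n : ℕ) : thueMorse n * thueMorse n = 1 := by
  rw [thueMorse, ← pow_add, ← two_mul, pow_mul]; norm_num

theorem iSeq_two_mul (n : ℕ) : iSeq (2 * n) = thueMorse n * iSeq n := by
  rw [iSeq, inv2_eq_inv2_div_two]
  simp [thueMorse, iSeq, pow_add, mul_comm]

theorem iSeq_two_mul_add_one (n : ℕ) : iSeq (2 * n + 1) = iSeq n := by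
  have h : (2 * n + 1) / 2 = n := by omega
  simp [iSeq, inv2_eq_inv2_div_two (2 * n + 1), h]

def hadamard : (ℝ × ℝ) →ₗ[ℝ] ℝ × ℝ :=
  (LinearMap.fst ℝ ℝ ℝ + LinearMap.snd ℝ ℝ ℝ).prod (LinearMap.fst ℝ ℝ ℝ - LinearMap.snd ℝ ℝ ℝ)

@[simp]
theorem hadamard_apply (x : ℝ × ℝ) : hadamard x = (x.1 + x.2, x.1 - x.2) := rfl

theorem hadamard_hadamard (x : ℝ × ℝ) : hadamard (hadamard x) = (2 : ℝ) • x := by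
  ext <;> simp <;> ring

theorem hadamard_pow_add_two_apply (j : ℕ) (x : ℝ × ℝ) :
    (hadamard ^ (j + 2)) x = (2 : ℝ) • (hadamard ^ j) x := by
  rw [pow_add, Module.End.mul_apply, pow_two, Module.End.mul_apply, hadamard_hadamard, map_smul]

theorem hadamard_pow_two_mul_apply (k : ℕ) (x : ℝ × ℝ) :
    (hadamard ^ (2 * k)) x = (2 : ℝ) ^ k • x := by
  induction k with
  | zero => simp
  | succ k ih => rw [mul_add, mul_one, hadamard_pow_add_two_apply, ih, smul_smul, pow_succ']

theorem hadamard_injective : Function.Injective hadamard := fun x y h => by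
  have h2 := congrArg hadamard h
  rw [hadamard_hadamard, hadamard_hadamard] at h2
  exact smul_right_injective _ two_ne_zero h2

theorem hadamard_pow_injective (j : ℕ) : Function.Injective (hadamard ^ j) := by
  rw [Module.End.coe_pow]; exact hadamard_injective.iterate j

noncomputable def walkStep (n : ℕ) : ℝ × ℝ := (iSeq n : ℝ) • ((1 : ℝ), (thueMorse n : ℝ))

noncomputable def walk (m : ℕ) : ℝ × ℝ := ∑ n ∈ range m, walkStep n

theorem walk_succ (m : ℕ) : walk (m + 1) = walk m + walkStep m := sum_range_succ _ _

theorem walkStep_two_mul_add_walkStep (n : ℕ) :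
    walkStep (2 * n) + walkStep (2 * n + 1) = hadamard (walkStep n) := by
  have ht : (thueMorse n : ℝ) * thueMorse n = 1 := by exact_mod_cast thueMorse_mul_self n
  simp only [walkStep, iSeq_two_mul, iSeq_two_mul_add_one, thueMorse_two_mul,
    thueMorse_two_mul_add_one]
  ext
  · simp; ring
  · simp; linear_combination (iSeq n : ℝ) * ht

theorem walkStep_four_mul (n : ℕ) : walkStep (4 * n) = walkStep n := by
  have hi : iSeq (4 * n) = iSeq n := by
    rw [show 4 * n = 2 * (2 * n) by ring, iSeq_two_mul, iSeq_two_mul, thueMorse_two_mul,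
      ← mul_assoc, thueMorse_mul_self, one_mul]
  rw [walkStep, walkStep, hi, show 4 * n = 2 * (2 * n) by ring, thueMorse_two_mul,
    thueMorse_two_mul]

theorem walkStep_four_mul_add_three (n : ℕ) : walkStep (4 * n + 3) = walkStep n := by
  rw [show 4 * n + 3 = 2 * (2 * n + 1) + 1 by ring]
  simp [walkStep, iSeq_two_mul_add_one, thueMorse_two_mul_add_one]

theorem walk_two_mul (m : ℕ) : walk (2 * m) = hadamard (walk m) := by
  induction m with
  | zero => simp [walk]; rfl
  | succ m ih =>
    rw [mul_add, mul_one, walk_succ, walk_succ, add_assoc, walkStep_two_mul_add_walkStep, ih,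
      walk_succ, map_add]

theorem walk_four_mul (m : ℕ) : walk (4 * m) = (2 : ℝ) • walk m := by
  rw [show 4 * m = 2 * (2 * m) by ring, walk_two_mul, walk_two_mul, hadamard_hadamard]

theorem walk_two_mul_add_one (m : ℕ) : walk (2 * m + 1) = walk (m / 2) + walk (m / 2 + 1) := by
  rcases Nat.even_or_odd' m with ⟨n, rfl | rfl⟩
  · rw [show 2 * (2 * n) + 1 = 4 * n + 1 by ring, walk_succ, walk_four_mul, walkStep_four_mul,
      walk_succ (2 * n / 2), two_smul, add_assoc, Nat.mul_div_cancel_left n two_pos]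
  · have h := walk_succ (4 * n + 3)
    rw [show 4 * n + 3 + 1 = 4 * (n + 1) by ring, walk_four_mul, walkStep_four_mul_add_three,
      walk_succ n] at h
    rw [show 2 * (2 * n + 1) + 1 = 4 * n + 3 by ring, show (2 * n + 1) / 2 = n by omega,
      walk_succ n]
    linear_combination (norm := module) -h

def baseTriangle : Set (ℝ × ℝ) := {x | 0 ≤ x.2 ∧ x.2 ≤ x.1 ∧ x.1 ≤ 1}

def triangle (j : ℕ) : Set (ℝ × ℝ) := (hadamard ^ j) '' baseTriangle

theorem hadamard_mem_triangle_succ {j : ℕ} {x : ℝ × ℝ} (hx : x ∈ triangle j) :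
    hadamard x ∈ triangle (j + 1) := by
  obtain ⟨a, ha, rfl⟩ := hx
  exact ⟨a, ha, by rw [pow_succ', Module.End.mul_apply]⟩

-- Midpoint convexity, read through `triangle (j + 2) = 2 • triangle j` (as `H² = 2`).
theorem add_mem_triangle_add_two {j : ℕ} {x y : ℝ × ℝ} (hx : x ∈ triangle j)
    (hy : y ∈ triangle j) : x + y ∈ triangle (j + 2) := by
  obtain ⟨a, ⟨ha₀, ha₁, ha₂⟩, rfl⟩ := hx
  obtain ⟨b, ⟨hb₀, hb₁, hb₂⟩, rfl⟩ := hy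
  refine ⟨(2 : ℝ)⁻¹ • (a + b), ?_, ?_⟩
  · simp only [baseTriangle, Set.mem_ofPred_eq, Prod.smul_fst, Prod.smul_snd, Prod.fst_add,
      Prod.snd_add, smul_eq_mul]
    refine ⟨by linarith, by linarith, by linarith⟩
  · rw [hadamard_pow_add_two_apply, ← map_smul, smul_inv_smul₀ two_ne_zero, map_add]

theorem walk_two_pow (j : ℕ) : walk (2 ^ j) = (hadamard ^ j) (1, 1) := by
  induction j with
  | zero => simp [walk, walkStep, iSeq, thueMorse, inv2]
  | succ j ih => rw [pow_succ', walk_two_mul, ih, pow_succ', Module.End.mul_apply]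

theorem walk_mem_triangle (j : ℕ) : ∀ m ≤ 2 ^ j, walk m ∈ triangle j := by
  induction j using Nat.twoStepInduction with
  | zero =>
    intro m hm
    interval_cases m
    · exact ⟨0, by simp [baseTriangle], by simp [walk]⟩
    · exact ⟨(1, 1), by simp [baseTriangle], by simpa using (walk_two_pow 0).symm⟩
  | one =>
    intro m hm
    interval_cases m
    · exact ⟨0, by simp [baseTriangle], by simp [walk]⟩
    · exact ⟨(1, 0), by simp [baseTriangle], by simpa using (walk_two_pow 0).symm⟩
    · exact ⟨(1, 1), by simp [baseTriangle], (walk_two_pow 1).symm⟩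
  | more j ih₀ ih₁ =>
    intro m hm
    rw [pow_add] at hm
    rcases Nat.even_or_odd' m with ⟨n, rfl | rfl⟩
    · rw [walk_two_mul]
      exact hadamard_mem_triangle_succ (ih₁ n (by rw [pow_succ]; omega))
    · rw [walk_two_mul_add_one]
      exact add_mem_triangle_add_two (ih₀ _ (by omega)) (ih₀ _ (by omega))

theorem eq_of_add_eq_two_smul {j : ℕ} {x y : ℝ × ℝ} (hx : x ∈ triangle j) (hy : y ∈ triangle j)
    (h : x + y = (2 : ℝ) • (hadamard ^ j) (1, 1)) : x = (hadamard ^ j) (1, 1) := by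
  obtain ⟨a, ⟨ha₀, ha₁, ha₂⟩, rfl⟩ := hx
  obtain ⟨b, ⟨hb₀, hb₁, hb₂⟩, rfl⟩ := hy
  rw [← map_add, ← map_smul] at h
  have hab := hadamard_pow_injective j h
  simp only [Prod.ext_iff, Prod.fst_add, Prod.snd_add, Prod.smul_mk, smul_eq_mul] at hab
  congr 1
  ext <;> linarith

theorem fst_le_of_mem_triangle {k : ℕ} {x : ℝ × ℝ} (hx : x ∈ triangle (2 * k + 1)) :
    x.1 ≤ 2 ^ (k + 1) ∧ (x.1 = 2 ^ (k + 1) → x = (hadamard ^ (2 * k + 1)) (1, 1)) := by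
  obtain ⟨a, ⟨ha₀, ha₁, ha₂⟩, rfl⟩ := hx
  simp only [pow_succ, Module.End.mul_apply, hadamard_pow_two_mul_apply, hadamard_apply,
    Prod.smul_fst, smul_eq_mul]
  have hk : (0 : ℝ) < 2 ^ k := by positivity
  refine ⟨by nlinarith, fun h => ?_⟩
  have ha : a = (1, 1) := by
    ext <;> nlinarith
  rw [ha]

theorem walk_zero_ne_walk_two_pow (j : ℕ) : walk 0 ≠ walk (2 ^ j) := by
  rw [walk_two_pow, walk, sum_range_zero, ← map_zero (hadamard ^ j)]
  exact fun h => by simpa [Prod.ext_iff] using hadamard_pow_injective j h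

theorem eq_two_pow_of_walk_eq (j : ℕ) : ∀ m ≤ 2 ^ j, walk m = walk (2 ^ j) → m = 2 ^ j := by
  induction j using Nat.twoStepInduction with
  | zero =>
    intro m hm h
    interval_cases m
    · exact absurd h (walk_zero_ne_walk_two_pow 0)
    · rfl
  | one =>
    intro m hm h
    interval_cases m
    · exact absurd h (walk_zero_ne_walk_two_pow 1)
    · have h₁ := walk_two_pow 0
      have h₂ := walk_two_pow 1
      simp only [pow_zero, pow_one, Module.End.one_apply, hadamard_apply] at h₁ h₂
      norm_num [h₁, h₂, Prod.ext_iff] at h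
    · rfl
  | more j ih₀ ih₁ =>
    intro m hm h
    rw [pow_add] at hm
    rcases Nat.even_or_odd' m with ⟨n, rfl | rfl⟩
    · rw [walk_two_mul, pow_succ', walk_two_mul] at h
      rw [ih₁ n (by rw [pow_succ]; omega) (hadamard_injective h), pow_succ' 2 (j + 1)]
    · rw [walk_two_mul_add_one, walk_two_pow, hadamard_pow_add_two_apply] at h
      have hcorner := eq_of_add_eq_two_smul (walk_mem_triangle j _ (by omega))
        (walk_mem_triangle j _ (by omega)) h
      have hn := ih₀ (n / 2) (by omega) (by rw [hcorner, walk_two_pow])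
      omega

theorem S_eq_fst_walk (n : ℕ) : (S n : ℝ) = (walk (n + 1)).1 := by
  simp [S, walk, walkStep, Prod.fst_sum]

theorem summatory_max_on_Ik_general (k : ℕ) (n : ℕ)
    (h₂ : n ≤ 2 ^ (2 * k + 1) - 1) :
    S n ≤ 2 ^ (k + 1) ∧ (S n = 2 ^ (k + 1) → n = 2 ^ (2 * k + 1) - 1) := by
  have hn : n + 1 ≤ 2 ^ (2 * k + 1) := by
    have := Nat.one_le_two_pow (n := 2 * k + 1); omega
  obtain ⟨hle, hcorner⟩ := fst_le_of_mem_triangle (walk_mem_triangle _ _ hn)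
  rw [← S_eq_fst_walk] at hle hcorner
  refine ⟨by exact_mod_cast hle, fun h => ?_⟩
  have hwalk : walk (n + 1) = walk (2 ^ (2 * k + 1)) := by
    rw [walk_two_pow]; exact hcorner (by exact_mod_cast h)
  exact Nat.eq_sub_of_add_eq (eq_two_pow_of_walk_eq _ _ hn hwalk)

theorem summatory_max_on_Ik (k : ℕ) (hk : 1 ≤ k) (n : ℕ)
    (h₁ : 2 ^ (2 * k - 1) ≤ n) (h₂ : n ≤ 2 ^ (2 * k + 1) - 1) :
    S n ≤ 2 ^ (k + 1) ∧ (S n = 2 ^ (k + 1) → n = 2 ^ (2 * k + 1) - 1) :=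
  summatory_max_on_Ik_general k n h₂
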